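/- arXiv:2204.11071 — 5 statements merged into one kernel-verified Lean document; each statement's English description precedes it below -/
import Mathlib

section
/- Let F ∈ ℝ^{3×3} be the Fisher information matrix defined in the context, built from complex square matrices B, Ḃ ∈ ℂ^{M×M}, a Hermitian positive semidefinite matrix Rx ∈ ℂ^{M×M}, α ∈ ℂ with α ≠ 0, a positive integer T, and σ² > 0. Suppose d := tr(B Rx B^H) > 0 and s := tr(Ḃ Rx Ḃ^H) − |tr(B Rx Ḃ^H)|²/d > 0 (both quantities tr(B Rx B^H) and tr(Ḃ Rx Ḃ^H) are real since Rx is Hermitian). Then F is invertible and the (1,1) entry of F^{-1} equals σ²/(2T|α|² s). (Lemma 1: closed-form CRLB for DoA estimation.) -/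
open Matrix
open scoped ComplexOrder

/-- The Fisher information matrix `F ∈ ℝ^{3×3}` for the parameter vector
`ξ = (θ, Re α, Im α)`, built from `B`, `Ḃ`, the transmit covariance `Rx`,
the channel coefficient `α`, the dwell time `T`, and the noise power `σ²`. -/
noncomputable def FIM {M : ℕ} (B Bdot Rx : Matrix (Fin M) (Fin M) ℂ)
    (α : ℂ) (T : ℕ) (σ2 : ℝ) : Matrix (Fin 3) (Fin 3) ℝ :=
  !![2 * T * ‖α‖ ^ 2 / σ2 * (Matrix.trace (Bdot * Rx * Bdotᴴ)).re,
     2 * T / σ2 * ((starRingEnd ℂ) α * Matrix.trace (B * Rx * Bdotᴴ)).re,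
     -(2 * T / σ2 * ((starRingEnd ℂ) α * Matrix.trace (B * Rx * Bdotᴴ)).im);
     2 * T / σ2 * ((starRingEnd ℂ) α * Matrix.trace (B * Rx * Bdotᴴ)).re,
     2 * T / σ2 * (Matrix.trace (B * Rx * Bᴴ)).re,
     0;
     -(2 * T / σ2 * ((starRingEnd ℂ) α * Matrix.trace (B * Rx * Bdotᴴ)).im),
     0,
     2 * T / σ2 * (Matrix.trace (B * Rx * Bᴴ)).re]

/-!
The Fisher matrix is an arrowhead matrix: its lower-right 2×2 block is the scalar matrix
`(2T/σ²) d · I`. Hence `F` is invertible as soon as `d ≠ 0` and the Schur complement of that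
block is nonzero, and then `[F⁻¹]₁₁` is the reciprocal of the Schur complement
`(2T/σ²)(|α|² tr(Ḃ Rx Ḃᴴ) − |conj α · tr(B Rx Ḃᴴ)|² / d) = (2T/σ²) |α|² s`.
-/

section Arrowhead

variable {K : Type*} [Field K]

def arrowhead (a b c e : K) : Matrix (Fin 3) (Fin 3) K :=
  !![a, b, c; b, e, 0; c, 0, e]

theorem det_arrowhead (a b c e : K) :
    (arrowhead a b c e).det = e * (a * e - b ^ 2 - c ^ 2) := by
  simp [arrowhead, det_fin_three]
  ring

theorem det_arrowhead_eq_sq_mul_schur {e : K} (a b c : K) (he : e ≠ 0) :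
    (arrowhead a b c e).det = e ^ 2 * (a - (b ^ 2 + c ^ 2) / e) := by
  rw [det_arrowhead]
  field_simp
  ring

theorem adjugate_arrowhead_zero_zero (a b c e : K) :
    (arrowhead a b c e).adjugate 0 0 = e ^ 2 := by
  simp [arrowhead, adjugate_fin_three]
  ring

theorem isUnit_arrowhead {a b c e : K} (he : e ≠ 0) (hS : a - (b ^ 2 + c ^ 2) / e ≠ 0) :
    IsUnit (arrowhead a b c e) := by
  rw [isUnit_iff_isUnit_det, det_arrowhead_eq_sq_mul_schur a b c he]
  exact (mul_ne_zero (pow_ne_zero 2 he) hS).isUnit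

theorem inv_arrowhead_zero_zero {e : K} (a b c : K) (he : e ≠ 0) :
    (arrowhead a b c e)⁻¹ 0 0 = (a - (b ^ 2 + c ^ 2) / e)⁻¹ := by
  rw [inv_def, Matrix.smul_apply, adjugate_arrowhead_zero_zero, Ring.inverse_eq_inv',
    det_arrowhead_eq_sq_mul_schur a b c he, smul_eq_mul]
  field_simp

end Arrowhead

theorem Complex.re_sq_add_im_sq (z : ℂ) : z.re ^ 2 + z.im ^ 2 = ‖z‖ ^ 2 := by
  rw [Complex.sq_norm, Complex.normSq_apply]
  ring

theorem crlb_closed_form_general {M : ℕ} (B Bdot Rx : Matrix (Fin M) (Fin M) ℂ)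
    (α : ℂ) (hα : α ≠ 0) (T : ℕ) (hT : 0 < T) (σ2 : ℝ) (hσ2 : 0 < σ2)
    (d s : ℝ)
    (hd : d = (Matrix.trace (B * Rx * Bᴴ)).re) (hd0 : 0 < d)
    (hs : s = (Matrix.trace (Bdot * Rx * Bdotᴴ)).re
          - ‖Matrix.trace (B * Rx * Bdotᴴ)‖ ^ 2 / d)
    (hs0 : 0 < s) :
    IsUnit (FIM B Bdot Rx α T σ2) ∧
      (FIM B Bdot Rx α T σ2)⁻¹ 0 0 = σ2 / (2 * T * ‖α‖ ^ 2 * s) := by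
  set t : ℂ := Matrix.trace (B * Rx * Bdotᴴ)
  set w : ℂ := starRingEnd ℂ α * t
  have hF : FIM B Bdot Rx α T σ2 =
      arrowhead (2 * T * ‖α‖ ^ 2 / σ2 * (Matrix.trace (Bdot * Rx * Bdotᴴ)).re)
        (2 * T / σ2 * w.re) (-(2 * T / σ2 * w.im)) (2 * T / σ2 * d) := by
    rw [hd]
    rfl
  have hw : w.re ^ 2 + w.im ^ 2 = ‖α‖ ^ 2 * ‖t‖ ^ 2 := by
    rw [Complex.re_sq_add_im_sq, norm_mul, Complex.norm_conj, mul_pow]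
  have hschur : 2 * T * ‖α‖ ^ 2 / σ2 * (Matrix.trace (Bdot * Rx * Bdotᴴ)).re
      - ((2 * T / σ2 * w.re) ^ 2 + (-(2 * T / σ2 * w.im)) ^ 2) / (2 * T / σ2 * d)
      = 2 * T / σ2 * ‖α‖ ^ 2 * s := by
    rw [hs]
    field_simp
    linear_combination -hw
  have he : 2 * T / σ2 * d ≠ 0 := by positivity
  have hS := hschur ▸ (by positivity : 2 * T / σ2 * ‖α‖ ^ 2 * s ≠ 0)
  rw [hF, inv_arrowhead_zero_zero _ _ _ he, hschur]
  refine ⟨isUnit_arrowhead he hS, ?_⟩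
  field_simp

/-- Lemma 1: closed-form CRLB for DoA estimation. -/
theorem crlb_closed_form {M : ℕ} (B Bdot Rx : Matrix (Fin M) (Fin M) ℂ)
    (hRxH : Rx.IsHermitian) (hRx : Rx.PosSemidef)
    (α : ℂ) (hα : α ≠ 0) (T : ℕ) (hT : 0 < T) (σ2 : ℝ) (hσ2 : 0 < σ2)
    (d s : ℝ)
    (hd : d = (Matrix.trace (B * Rx * Bᴴ)).re) (hd0 : 0 < d)
    (hs : s = (Matrix.trace (Bdot * Rx * Bdotᴴ)).re
          - ‖Matrix.trace (B * Rx * Bdotᴴ)‖ ^ 2 / d)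
    (hs0 : 0 < s) :
    IsUnit (FIM B Bdot Rx α T σ2) ∧
      (FIM B Bdot Rx α T σ2)⁻¹ 0 0 = σ2 / (2 * T * ‖α‖ ^ 2 * s) :=
  crlb_closed_form_general B Bdot Rx α hα T hT σ2 hσ2 d s hd hd0 hs hs0
end

section
/- With b = G^T A v, κ = j·2π·(d/λ)·cos(θ), ḃ = κ·G^T A D v, B = b b^T, Ḃ = ḃ b^T + b ḃ^T, R1 = A^H G* G^T A, R2 = A^H G* Rx* G^T A, suppose p := v^H R1 v > 0 and q := v^H R2 v > 0 (these are real since R1, R2 are Hermitian). Then tr(Ḃ Rx Ḃ^H) − |tr(B Rx Ḃ^H)|²/tr(B Rx B^H) = (4π² d² cos²θ / λ²) · [ q·( v^H D R1 D v − |v^H D R1 v|²/p ) + p·( v^H D R2 D v − |v^H D R2 v|²/q ) ]. (This is the identity underlying the closed-form CRLB expression in terms of the reflective beamforming vector v, Eq. (11).) -/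
open Matrix
open scoped ComplexOrder

/-!
With `X = Gᵀ A`, one has `b = X v` and `ḃ = κ X (D v)`. The trace of a product of rank-one
matrices `(x₁ x₂ᵀ) Rx (y₁ y₂ᵀ)ᴴ` factors as `(y₂ᴴ Rxᵀ x₂)(y₁ᴴ x₁)`, so every trace in the statement
is a combination of the two Hermitian forms `⟨y, x⟩ = yᴴ x` and `⟨y, x⟩' = yᴴ Rxᵀ x` evaluated at
`b` and `ḃ`. Expanding `|tr(B Rx Ḃᴴ)|²`, its cross terms cancel those of `tr(Ḃ Rx Ḃᴴ)` and what
remains is a sum of two Schur complements, one per form. Pulled back along `X`, the two forms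
become `R1` and `R2` (as `Rx* = Rxᵀ` for Hermitian `Rx`), and `|κ|²` is the prefactor.
-/

theorem rankTwo_schur_complement_scalar (p q : ℝ) (P Q p' q' : ℂ) (hp : p ≠ 0) (hq : q ≠ 0) :
    (q * p' + Q * star P + star Q * P + q' * p).re - ‖q * P + Q * p‖ ^ 2 / ((q : ℂ) * p).re
      = q * (p'.re - ‖P‖ ^ 2 / p) + p * (q'.re - ‖Q‖ ^ 2 / q) := by
  simp only [← Complex.normSq_eq_norm_sq, Complex.normSq_apply, Complex.add_re, Complex.mul_re,
    Complex.add_im, Complex.mul_im, Complex.ofReal_re, Complex.ofReal_im, Complex.star_def,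
    Complex.conj_re, Complex.conj_im]
  field_simp
  ring

namespace Matrix

section
variable {α m n : Type*} [CommSemiring α] [StarRing α] [Fintype m] [Fintype n]

theorem trace_vecMulVec_mul_mul_conjTranspose_vecMulVec (R : Matrix m m α) (x₁ x₂ y₁ y₂ : m → α) :
    trace (vecMulVec x₁ x₂ * R * (vecMulVec y₁ y₂)ᴴ) = (star y₂ ⬝ᵥ Rᵀ *ᵥ x₂) * (star y₁ ⬝ᵥ x₁) := by
  rw [conjTranspose_vecMulVec, vecMulVec_mul, vecMulVec_mul_vecMulVec, trace_vecMulVec,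
    dotProduct_smul, smul_eq_mul, mulVec_transpose, dotProduct_comm (star y₂), dotProduct_comm x₁]

theorem IsHermitian.star_dotProduct_mulVec {S : Matrix m m α} (hS : S.IsHermitian) (x y : m → α) :
    star x ⬝ᵥ S *ᵥ y = star (star y ⬝ᵥ S *ᵥ x) := by
  rw [star_dotProduct, star_mulVec, hS.eq, dotProduct_mulVec]

theorem star_mulVec_dotProduct_mulVec_mulVec (X Y : Matrix m n α) (S : Matrix m m α) (x y : n → α) :
    star (X *ᵥ x) ⬝ᵥ S *ᵥ (Y *ᵥ y) = star x ⬝ᵥ (Xᴴ * S * Y) *ᵥ y := by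
  rw [star_mulVec, ← dotProduct_mulVec, mulVec_mulVec, mulVec_mulVec, Matrix.mul_assoc]

theorem star_smul_mulVec_mul_dotProduct_mulVec (X : Matrix m n α) {D : Matrix n n α}
    (hD : Dᴴ = D) (S : Matrix m m α) (κ : α) (v : n → α) :
    star (κ • ((X * D) *ᵥ v)) ⬝ᵥ S *ᵥ (X *ᵥ v) = star κ * (star v ⬝ᵥ (D * (Xᴴ * S * X)) *ᵥ v) := by
  rw [star_smul, smul_dotProduct, star_mulVec_dotProduct_mulVec_mulVec, conjTranspose_mul, hD,
    Matrix.mul_assoc, Matrix.mul_assoc, Matrix.mul_assoc, smul_eq_mul]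

theorem star_smul_mulVec_mul_dotProduct_smul_mulVec_mul (X : Matrix m n α) {D : Matrix n n α}
    (hD : Dᴴ = D) (S : Matrix m m α) (κ : α) (v : n → α) :
    star (κ • ((X * D) *ᵥ v)) ⬝ᵥ S *ᵥ (κ • ((X * D) *ᵥ v))
      = star κ * κ * (star v ⬝ᵥ (D * (Xᴴ * S * X) * D) *ᵥ v) := by
  rw [star_smul, smul_dotProduct, mulVec_smul, dotProduct_smul,
    star_mulVec_dotProduct_mulVec_mulVec, conjTranspose_mul, hD, smul_eq_mul, smul_eq_mul]
  simp only [Matrix.mul_assoc]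
  ring

end

theorem re_trace_rankTwo_schur_complement {m : Type*} [Fintype m] {R : Matrix m m ℂ}
    (hR : R.IsHermitian) (b c : m → ℂ) (p q : ℝ)
    (hp : (star b ⬝ᵥ b).re = p) (hp0 : p ≠ 0)
    (hq : (star b ⬝ᵥ Rᵀ *ᵥ b).re = q) (hq0 : q ≠ 0) :
    (trace ((vecMulVec c b + vecMulVec b c) * R * (vecMulVec c b + vecMulVec b c)ᴴ)).re
      - ‖trace (vecMulVec b b * R * (vecMulVec c b + vecMulVec b c)ᴴ)‖ ^ 2
        / (trace (vecMulVec b b * R * (vecMulVec b b)ᴴ)).re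
    = q * ((star c ⬝ᵥ c).re - ‖star c ⬝ᵥ b‖ ^ 2 / p)
      + p * ((star c ⬝ᵥ Rᵀ *ᵥ c).re - ‖star c ⬝ᵥ Rᵀ *ᵥ b‖ ^ 2 / q) := by
  have hRT : Rᵀ.IsHermitian := hR.transpose
  have hbb : star b ⬝ᵥ b = p := by
    rw [← hp]; exact (Complex.conj_eq_iff_re.mp (star_dotProduct b b).symm).symm
  have hbRb : star b ⬝ᵥ Rᵀ *ᵥ b = q := by
    rw [← hq]; exact (Complex.conj_eq_iff_re.mp (hRT.star_dotProduct_mulVec b b).symm).symm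
  have hbc : star b ⬝ᵥ c = star (star c ⬝ᵥ b) := star_dotProduct b c
  have hbRc : star b ⬝ᵥ Rᵀ *ᵥ c = star (star c ⬝ᵥ Rᵀ *ᵥ b) := hRT.star_dotProduct_mulVec b c
  simp only [conjTranspose_add, add_mul, mul_add, trace_add,
    trace_vecMulVec_mul_mul_conjTranspose_vecMulVec, hbb, hbRb, hbc, hbRc]
  convert rankTwo_schur_complement_scalar p q (star c ⬝ᵥ b) (star c ⬝ᵥ Rᵀ *ᵥ b)
    (star c ⬝ᵥ c) (star c ⬝ᵥ Rᵀ *ᵥ c) hp0 hq0 using 3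
  ring

end Matrix

theorem crlb_reflective_identity_general {N M : ℕ} (d lmb θ : ℝ)
    (v : Fin N → ℂ) (G : Matrix (Fin N) (Fin M) ℂ)
    (Rx : Matrix (Fin M) (Fin M) ℂ) (hRxH : Rx.IsHermitian)
    (A D : Matrix (Fin N) (Fin N) ℂ)
    (hD : D = Matrix.diagonal (fun n : Fin N => ((n : ℕ) : ℂ)))
    (κ : ℂ) (hκ : κ = Complex.I * (2 * Real.pi * (d / lmb) * Real.cos θ))
    (b bdot : Fin M → ℂ)
    (hb : b = (Gᵀ * A).mulVec v)
    (hbdot : bdot = κ • (Gᵀ * A * D).mulVec v)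
    (B Bdot : Matrix (Fin M) (Fin M) ℂ)
    (hB : B = Matrix.vecMulVec b b)
    (hBdot : Bdot = Matrix.vecMulVec bdot b + Matrix.vecMulVec b bdot)
    (R1 R2 : Matrix (Fin N) (Fin N) ℂ)
    (hR1 : R1 = Aᴴ * G.map (starRingEnd ℂ) * Gᵀ * A)
    (hR2 : R2 = Aᴴ * G.map (starRingEnd ℂ) * Rx.map (starRingEnd ℂ) * Gᵀ * A)
    (p q : ℝ)
    (hp : p = (star v ⬝ᵥ R1.mulVec v).re) (hp0 : 0 < p)
    (hq : q = (star v ⬝ᵥ R2.mulVec v).re) (hq0 : 0 < q) :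
    (Matrix.trace (Bdot * Rx * Bdotᴴ)).re
      - ‖Matrix.trace (B * Rx * Bdotᴴ)‖ ^ 2
        / (Matrix.trace (B * Rx * Bᴴ)).re
    = (4 * Real.pi ^ 2 * d ^ 2 * Real.cos θ ^ 2 / lmb ^ 2) *
        (q * ((star v ⬝ᵥ (D * R1 * D).mulVec v).re
                - ‖star v ⬝ᵥ (D * R1).mulVec v‖ ^ 2 / p)
         + p * ((star v ⬝ᵥ (D * R2 * D).mulVec v).re
                - ‖star v ⬝ᵥ (D * R2).mulVec v‖ ^ 2 / q)) := by
  have hDH : Dᴴ = D := by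
    rw [hD, diagonal_conjTranspose]
    congr 1
    funext n
    simp
  have hR1X : R1 = (Gᵀ * A)ᴴ * (Gᵀ * A) := by
    rw [hR1, conjTranspose_mul, transpose_conjTranspose]
    simp only [Matrix.mul_assoc]
    rfl
  have hR2X : R2 = (Gᵀ * A)ᴴ * Rxᵀ * (Gᵀ * A) := by
    have hRxT : Rx.map (starRingEnd ℂ) = Rxᵀ :=
      calc Rx.map (starRingEnd ℂ) = Rxᴴᵀ := rfl
        _ = Rxᵀ := by rw [hRxH.eq]
    rw [hR2, hRxT, conjTranspose_mul, transpose_conjTranspose]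
    simp only [Matrix.mul_assoc]
    rfl
  have hκ2 : ‖κ‖ ^ 2 = 4 * Real.pi ^ 2 * d ^ 2 * Real.cos θ ^ 2 / lmb ^ 2 := by
    rw [hκ, norm_mul, Complex.norm_I, one_mul]
    norm_cast
    rw [Real.norm_eq_abs, sq_abs]
    ring
  have hbb := star_mulVec_dotProduct_mulVec_mulVec (Gᵀ * A) (Gᵀ * A) (1 : Matrix _ _ ℂ) v v
  have hdb := star_smul_mulVec_mul_dotProduct_mulVec (Gᵀ * A) hDH (1 : Matrix _ _ ℂ) κ v
  have hdd := star_smul_mulVec_mul_dotProduct_smul_mulVec_mul (Gᵀ * A) hDH (1 : Matrix _ _ ℂ) κ v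
  simp only [one_mulVec, Matrix.mul_one] at hbb hdb hdd
  rw [hB, hBdot, re_trace_rankTwo_schur_complement hRxH b bdot p q ?_ hp0.ne' ?_ hq0.ne', hbdot, hb,
    hdb, hdd, star_smul_mulVec_mul_dotProduct_mulVec _ hDH,
    star_smul_mulVec_mul_dotProduct_smul_mulVec_mul _ hDH, ← hR1X, ← hR2X]
  · rw [Complex.star_def, Complex.conj_mul', ← Complex.ofReal_pow]
    simp only [Complex.re_ofReal_mul, norm_mul, Complex.norm_conj, mul_pow, hκ2]
    ring
  · rw [hp, hb, hbb, hR1X]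
  · rw [hq, hb, star_mulVec_dotProduct_mulVec_mulVec, hR2X]

/-- The identity underlying Eq. (11): the CRLB denominator
`tr(Ḃ Rx Ḃᴴ) − |tr(B Rx Ḃᴴ)|²/tr(B Rx Bᴴ)` expressed via the reflective
beamforming vector `v`, with `b = Gᵀ A v`, `ḃ = κ Gᵀ A D v`,
`κ = j·2π·(d/λ)·cos θ`, `B = b bᵀ`, `Ḃ = ḃ bᵀ + b ḃᵀ`,
`R1 = Aᴴ G* Gᵀ A`, `R2 = Aᴴ G* Rx* Gᵀ A`. -/
theorem crlb_reflective_identity {N M : ℕ} (d lmb θ : ℝ) (hd : 0 < d) (hlmb : 0 < lmb)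
    (a : Fin N → ℂ)
    (ha : ∀ n : Fin N, a n =
      Complex.exp (Complex.I * (2 * Real.pi * (n : ℕ) * d * Real.sin θ / lmb)))
    (v : Fin N → ℂ) (G : Matrix (Fin N) (Fin M) ℂ)
    (Rx : Matrix (Fin M) (Fin M) ℂ) (hRxH : Rx.IsHermitian) (hRx : Rx.PosSemidef)
    (A D : Matrix (Fin N) (Fin N) ℂ)
    (hA : A = Matrix.diagonal a)
    (hD : D = Matrix.diagonal (fun n : Fin N => ((n : ℕ) : ℂ)))
    (κ : ℂ) (hκ : κ = Complex.I * (2 * Real.pi * (d / lmb) * Real.cos θ))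
    (b bdot : Fin M → ℂ)
    (hb : b = (Gᵀ * A).mulVec v)
    (hbdot : bdot = κ • (Gᵀ * A * D).mulVec v)
    (B Bdot : Matrix (Fin M) (Fin M) ℂ)
    (hB : B = Matrix.vecMulVec b b)
    (hBdot : Bdot = Matrix.vecMulVec bdot b + Matrix.vecMulVec b bdot)
    (R1 R2 : Matrix (Fin N) (Fin N) ℂ)
    (hR1 : R1 = Aᴴ * G.map (starRingEnd ℂ) * Gᵀ * A)
    (hR2 : R2 = Aᴴ * G.map (starRingEnd ℂ) * Rx.map (starRingEnd ℂ) * Gᵀ * A)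
    (p q : ℝ)
    (hp : p = (star v ⬝ᵥ R1.mulVec v).re) (hp0 : 0 < p)
    (hq : q = (star v ⬝ᵥ R2.mulVec v).re) (hq0 : 0 < q) :
    (Matrix.trace (Bdot * Rx * Bdotᴴ)).re
      - ‖Matrix.trace (B * Rx * Bdotᴴ)‖ ^ 2
        / (Matrix.trace (B * Rx * Bᴴ)).re
    = (4 * Real.pi ^ 2 * d ^ 2 * Real.cos θ ^ 2 / lmb ^ 2) *
        (q * ((star v ⬝ᵥ (D * R1 * D).mulVec v).re
                - ‖star v ⬝ᵥ (D * R1).mulVec v‖ ^ 2 / p)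
         + p * ((star v ⬝ᵥ (D * R2 * D).mulVec v).re
                - ‖star v ⬝ᵥ (D * R2).mulVec v‖ ^ 2 / q)) :=
  crlb_reflective_identity_general d lmb θ v G Rx hRxH A D hD κ hκ b bdot hb hbdot B Bdot hB hBdot
    R1 R2 hR1 hR2 p q hp hp0 hq hq0
end

section
/- Suppose rank(G) = 1. Let a ∈ ℂ^N be arbitrary (playing the role of the steering vector and its derivative direction), let Φ = diag(v) for v ∈ ℂ^N, let b = G^T Φ^T a, let ḃ = G^T w for any w ∈ ℂ^N, and set B = b b^T and Ḃ = ḃ b^T + b ḃ^T. Then the Fisher information matrix F ∈ ℝ^{3×3} (defined in the context from B, Ḃ, Rx, α, T, σ²) is singular, i.e., F is not invertible, for every Hermitian positive semidefinite Rx, every α ∈ ℂ, every positive integer T, and every σ² > 0. (Proposition 1, forward direction: when there is only a single path between AP and IRS, the target's DoA is not estimable and CRLB(θ) = ∞.) -/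
open Matrix
open scoped ComplexOrder

/-! Both `b = Gᵀ(Φᵀa)` and `ḃ = Gᵀw` lie in the range of `Gᵀ`, which is a line when `rank G = 1`,
so `Ḃ = κB` for some `κ ∈ ℂ`. Then `F = [[p, x, y], [x, q, 0], [y, 0, q]]` has
`det F = q (pq - x² - y²)`, and `x² + y² = (2T/σ²)² |ᾱ κ̄ t|² = pq` because `t = tr(B Rx Bᴴ)` is real. -/

open Module

theorem det_fin_three_arrowhead {R : Type*} [CommRing R] (p q x y : R) :
    !![p, x, y; x, q, 0; y, 0, q].det = q * (p * q - x ^ 2 - y ^ 2) := by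
  rw [det_fin_three]
  simp only [of_apply, cons_val', cons_val_zero, cons_val_one, cons_val_two, empty_val',
    cons_val_fin_one, head_cons, tail_cons, head_fin_const]
  ring

theorem Matrix.IsHermitian.trace_im {n : Type*} [Fintype n] {A : Matrix n n ℂ}
    (hA : A.IsHermitian) : A.trace.im = 0 :=
  Complex.conj_eq_iff_im.mp (by rw [← Complex.star_def, ← trace_conjTranspose, hA.eq])

theorem det_FIM_smul_eq_zero {M : ℕ} {B Rx : Matrix (Fin M) (Fin M) ℂ} (hRx : Rx.IsHermitian)
    (κ α : ℂ) (T : ℕ) (σ2 : ℝ) : (FIM B (κ • B) Rx α T σ2).det = 0 := by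
  set t := trace (B * Rx * Bᴴ)
  have ht : t.im = 0 := (isHermitian_mul_mul_conjTranspose B hRx).trace_im
  have hcross : trace (B * Rx * (κ • B)ᴴ) = starRingEnd ℂ κ * t := by
    rw [conjTranspose_smul, Matrix.mul_smul, trace_smul, smul_eq_mul, Complex.star_def]
  have hdiag : trace (κ • B * Rx * (κ • B)ᴴ) = κ * starRingEnd ℂ κ * t := by
    rw [Matrix.smul_mul, Matrix.smul_mul, trace_smul, hcross, smul_eq_mul, mul_assoc]
  rw [FIM, hdiag, hcross, det_fin_three_arrowhead]
  refine mul_eq_zero_of_right _ ?_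
  simp only [Complex.sq_norm, Complex.normSq_apply, Complex.mul_re, Complex.mul_im,
    Complex.conj_re, Complex.conj_im, ht]
  ring

theorem exists_vecMulVec_add_eq_smul_of_finrank_eq_one {K n : Type*} [Field K] [Fintype n]
    {S : Submodule K (n → K)} (hS : finrank K S = 1) {u v : n → K} (hu : u ∈ S) (hv : v ∈ S) :
    ∃ κ : K, vecMulVec v u + vecMulVec u v = κ • vecMulVec u u := by
  by_cases hu0 : u = 0
  · exact ⟨0, by simp [hu0]⟩
  obtain ⟨c, hc⟩ := exists_smul_eq_of_finrank_eq_one hS (x := ⟨u, hu⟩)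
    (by simpa using hu0) ⟨v, hv⟩
  have hv_eq : v = c • u := (congrArg Subtype.val hc).symm
  refine ⟨2 * c, ?_⟩
  rw [hv_eq, smul_vecMulVec, vecMulVec_smul, two_mul, add_smul]

theorem fim_singular_of_rank_one_general {N M : ℕ} (G : Matrix (Fin N) (Fin M) ℂ)
    (hG : G.rank = 1) (a w : Fin N → ℂ)
    (Φ : Matrix (Fin N) (Fin N) ℂ)
    (b bdot : Fin M → ℂ)
    (hb : b = (Gᵀ * Φᵀ).mulVec a) (hbdot : bdot = Gᵀ.mulVec w)
    (B Bdot : Matrix (Fin M) (Fin M) ℂ)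
    (hB : B = Matrix.vecMulVec b b)
    (hBdot : Bdot = Matrix.vecMulVec bdot b + Matrix.vecMulVec b bdot)
    (Rx : Matrix (Fin M) (Fin M) ℂ) (hRxH : Rx.IsHermitian)
    (α : ℂ) (T : ℕ) (σ2 : ℝ) :
    ¬ IsUnit (FIM B Bdot Rx α T σ2) := by
  have hrange : finrank ℂ (LinearMap.range Gᵀ.mulVecLin) = 1 := by
    rw [← rank, rank_transpose, hG]
  have hb_mem : b ∈ LinearMap.range Gᵀ.mulVecLin :=
    ⟨Φᵀ *ᵥ a, by rw [hb, mulVecLin_apply, mulVec_mulVec]⟩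
  have hbdot_mem : bdot ∈ LinearMap.range Gᵀ.mulVecLin := ⟨w, hbdot.symm⟩
  obtain ⟨κ, hκ⟩ := exists_vecMulVec_add_eq_smul_of_finrank_eq_one hrange hb_mem hbdot_mem
  rw [isUnit_iff_isUnit_det, hBdot, hκ, ← hB, det_FIM_smul_eq_zero hRxH]
  exact not_isUnit_zero

/-- Proposition 1 (forward direction): if the AP-IRS channel `G` has rank one,
then the Fisher information matrix is singular for every choice of transmit
covariance `Rx`, channel coefficient `α`, dwell time `T`, and noise power `σ²`. -/
theorem fim_singular_of_rank_one {N M : ℕ} (G : Matrix (Fin N) (Fin M) ℂ)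
    (hG : G.rank = 1) (a v w : Fin N → ℂ)
    (Φ : Matrix (Fin N) (Fin N) ℂ) (hΦ : Φ = Matrix.diagonal v)
    (b bdot : Fin M → ℂ)
    (hb : b = (Gᵀ * Φᵀ).mulVec a) (hbdot : bdot = Gᵀ.mulVec w)
    (B Bdot : Matrix (Fin M) (Fin M) ℂ)
    (hB : B = Matrix.vecMulVec b b)
    (hBdot : Bdot = Matrix.vecMulVec bdot b + Matrix.vecMulVec b bdot)
    (Rx : Matrix (Fin M) (Fin M) ℂ) (hRxH : Rx.IsHermitian) (hRx : Rx.PosSemidef)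
    (α : ℂ) (T : ℕ) (hT : 0 < T) (σ2 : ℝ) (hσ2 : 0 < σ2) :
    ¬ IsUnit (FIM B Bdot Rx α T σ2) :=
  fim_singular_of_rank_one_general G hG a w Φ b bdot hb hbdot B Bdot hB hBdot Rx hRxH α T σ2
end

section
/- Let b, ḃ ∈ ℂ^M with b ≠ 0 and {b, ḃ} linearly independent over ℂ, and set B = b b^T, Ḃ = ḃ b^T + b ḃ^T. Let Rx ∈ ℂ^{M×M} be Hermitian positive definite, α ∈ ℂ with α ≠ 0, T a positive integer, and σ² > 0. Then the Fisher information matrix F ∈ ℝ^{3×3} (defined in the context) is invertible; equivalently, tr(B Rx B^H) > 0 and tr(Ḃ Rx Ḃ^H) − |tr(B Rx Ḃ^H)|²/tr(B Rx B^H) > 0, so the CRLB for estimating θ is finite. (Proposition 1, converse direction: when the AP-IRS channel has more than one path, so that b = G^T A v and its angular derivative ḃ can be linearly independent, the FIM is invertible and the DoA is estimable.) -/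
open Matrix
open scoped ComplexOrder

/-!
A positive definite `Rx` makes `⟪X, Y⟫ = tr(Y Rx Xᴴ)` an inner product on square matrices.
Reading off a column `j` with `b j ≠ 0` turns `B` and `Ḃ` into `b j • b` and
`b j • ḃ + ḃ j • b`, so the linear independence of `b, ḃ` passes to `B, Ḃ`. Strict
Cauchy–Schwarz then gives `|tr(B Rx Ḃᴴ)|² < tr(B Rx Bᴴ) tr(Ḃ Rx Ḃᴴ)`, and since the last two
rows of `F` are sparse,
`det F = (2T/σ²)³ |α|² tr(B Rx Bᴴ) (tr(B Rx Bᴴ) tr(Ḃ Rx Ḃᴴ) - |tr(B Rx Ḃᴴ)|²) > 0`.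
-/

theorem norm_inner_lt_norm_mul_norm_of_linearIndependent {𝕜 E : Type*} [RCLike 𝕜]
    [NormedAddCommGroup E] [InnerProductSpace 𝕜 E] {x y : E}
    (h : LinearIndependent 𝕜 ![x, y]) : ‖inner 𝕜 x y‖ < ‖x‖ * ‖y‖ := by
  refine (norm_inner_le_norm x y).lt_of_ne fun heq ↦ ?_
  obtain hx | ⟨r, rfl⟩ := ((norm_inner_eq_norm_tfae 𝕜 x y).out 0 2).mp heq
  · exact h.ne_zero 0 (by simpa using hx)
  · exact (LinearIndependent.pair_iff' (by simpa using h.ne_zero 0)).mp h r rfl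

namespace Matrix

variable {𝕜 n : Type*} [RCLike 𝕜] [Fintype n] {A X Y : Matrix n n 𝕜}

theorem PosDef.re_trace_mul_mul_conjTranspose_pos (hA : A.PosDef) (hX : X ≠ 0) :
    0 < RCLike.re (X * A * Xᴴ).trace := by
  let := A.toMatrixNormedAddCommGroup hA
  let := A.toMatrixInnerProductSpace hA.posSemidef
  exact re_inner_self_pos (𝕜 := 𝕜).mpr hX

theorem PosDef.sq_norm_trace_mul_mul_conjTranspose_lt (hA : A.PosDef)
    (h : LinearIndependent 𝕜 ![X, Y]) :
    ‖(X * A * Yᴴ).trace‖ ^ 2 < RCLike.re (X * A * Xᴴ).trace * RCLike.re (Y * A * Yᴴ).trace := by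
  let := A.toMatrixNormedAddCommGroup hA
  let := A.toMatrixInnerProductSpace hA.posSemidef
  have hcs :=
    norm_inner_lt_norm_mul_norm_of_linearIndependent (LinearIndependent.pair_symm_iff.mp h)
  calc ‖(X * A * Yᴴ).trace‖ ^ 2 = ‖inner 𝕜 Y X‖ ^ 2 := rfl
    _ < (‖Y‖ * ‖X‖) ^ 2 := by gcongr
    _ = _ := by
      rw [mul_pow, norm_sq_eq_re_inner (𝕜 := 𝕜), norm_sq_eq_re_inner (𝕜 := 𝕜), mul_comm]
      rfl

theorem linearIndependent_vecMulVec_pair {K m : Type*} [Field K] {b c : m → K}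
    (h : LinearIndependent K ![b, c]) :
    LinearIndependent K ![vecMulVec b b, vecMulVec c b + vecMulVec b c] := by
  have hb : b ≠ 0 := by simpa using h.ne_zero 0
  obtain ⟨j, hj⟩ : ∃ j, b j ≠ 0 := Function.ne_iff.mp hb
  refine LinearIndependent.pair_iff.mpr fun s t hst ↦ ?_
  have hcol : (s * b j + t * c j) • b + (t * b j) • c = 0 := by
    ext i
    have hij := congrFun (congrFun hst i) j
    simp only [smul_add, add_apply, smul_apply, vecMulVec_apply, smul_eq_mul, zero_apply,
      Pi.add_apply, Pi.smul_apply, Pi.zero_apply] at hij ⊢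
    linear_combination hij
  obtain ⟨h₁, h₂⟩ := LinearIndependent.pair_iff.mp h _ _ hcol
  obtain rfl : t = 0 := (mul_eq_zero.mp h₂).resolve_right hj
  simpa [hj] using h₁

end Matrix

theorem det_FIM {M : ℕ} (B Bdot Rx : Matrix (Fin M) (Fin M) ℂ) (α : ℂ) (T : ℕ) (σ2 : ℝ) :
    (FIM B Bdot Rx α T σ2).det = (2 * T / σ2) ^ 3 * ‖α‖ ^ 2 * (trace (B * Rx * Bᴴ)).re *
      ((trace (B * Rx * Bᴴ)).re * (trace (Bdot * Rx * Bdotᴴ)).re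
        - ‖trace (B * Rx * Bdotᴴ)‖ ^ 2) := by
  have hz : ((starRingEnd ℂ) α * trace (B * Rx * Bdotᴴ)).re ^ 2
      + ((starRingEnd ℂ) α * trace (B * Rx * Bdotᴴ)).im ^ 2
      = ‖α‖ ^ 2 * ‖trace (B * Rx * Bdotᴴ)‖ ^ 2 := by
    rw [← mul_pow, ← Complex.norm_conj α, ← norm_mul, Complex.sq_norm, Complex.normSq_apply]
    ring
  simp only [FIM, det_fin_three, Fin.isValue, of_apply, cons_val', cons_val_zero, cons_val_fin_one,
    cons_val_one, cons_val]
  linear_combination (-(2 * T / σ2) ^ 3 * (trace (B * Rx * Bᴴ)).re) * hz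

theorem fim_invertible_of_linearIndependent_general {M : ℕ} (b bdot : Fin M → ℂ)
    (hli : LinearIndependent ℂ ![b, bdot])
    (B Bdot : Matrix (Fin M) (Fin M) ℂ)
    (hB : B = Matrix.vecMulVec b b)
    (hBdot : Bdot = Matrix.vecMulVec bdot b + Matrix.vecMulVec b bdot)
    (Rx : Matrix (Fin M) (Fin M) ℂ) (hRx : Rx.PosDef)
    (α : ℂ) (hα : α ≠ 0) (T : ℕ) (hT : 0 < T) (σ2 : ℝ) (hσ2 : 0 < σ2) :
    IsUnit (FIM B Bdot Rx α T σ2) ∧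
      0 < (Matrix.trace (B * Rx * Bᴴ)).re ∧
      0 < (Matrix.trace (Bdot * Rx * Bdotᴴ)).re
          - ‖Matrix.trace (B * Rx * Bdotᴴ)‖ ^ 2
            / (Matrix.trace (B * Rx * Bᴴ)).re := by
  have hBBdot : LinearIndependent ℂ ![B, Bdot] := hB ▸ hBdot ▸ linearIndependent_vecMulVec_pair hli
  have hu : 0 < (trace (B * Rx * Bᴴ)).re :=
    hRx.re_trace_mul_mul_conjTranspose_pos (by simpa using hBBdot.ne_zero 0)
  have hgap : 0 < (trace (B * Rx * Bᴴ)).re * (trace (Bdot * Rx * Bdotᴴ)).re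
      - ‖trace (B * Rx * Bdotᴴ)‖ ^ 2 :=
    sub_pos.mpr (hRx.sq_norm_trace_mul_mul_conjTranspose_lt hBBdot)
  refine ⟨?_, hu, ?_⟩
  · rw [isUnit_iff_isUnit_det, det_FIM]
    have : (0 : ℝ) < T := Nat.cast_pos.mpr hT
    exact IsUnit.mk0 _ (by positivity)
  · rw [sub_pos, div_lt_iff₀ hu]
    linarith

/-- Proposition 1 (converse direction): if `b ≠ 0` and `{b, ḃ}` are linearly
independent, `Rx` is Hermitian positive definite, `α ≠ 0`, `T ≥ 1`, `σ² > 0`,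
then the Fisher information matrix is invertible, and equivalently the CRLB
denominator quantities are positive, so the CRLB for estimating θ is finite. -/
theorem fim_invertible_of_linearIndependent {M : ℕ} (b bdot : Fin M → ℂ)
    (hb : b ≠ 0) (hli : LinearIndependent ℂ ![b, bdot])
    (B Bdot : Matrix (Fin M) (Fin M) ℂ)
    (hB : B = Matrix.vecMulVec b b)
    (hBdot : Bdot = Matrix.vecMulVec bdot b + Matrix.vecMulVec b bdot)
    (Rx : Matrix (Fin M) (Fin M) ℂ) (hRxH : Rx.IsHermitian) (hRx : Rx.PosDef)
    (α : ℂ) (hα : α ≠ 0) (T : ℕ) (hT : 0 < T) (σ2 : ℝ) (hσ2 : 0 < σ2) :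
    IsUnit (FIM B Bdot Rx α T σ2) ∧
      0 < (Matrix.trace (B * Rx * Bᴴ)).re ∧
      0 < (Matrix.trace (Bdot * Rx * Bdotᴴ)).re
          - ‖Matrix.trace (B * Rx * Bdotᴴ)‖ ^ 2
            / (Matrix.trace (B * Rx * Bᴴ)).re :=
  fim_invertible_of_linearIndependent_general b bdot hli B Bdot hB hBdot Rx hRx α hα T hT σ2 hσ2
end

section
/- With b = G^T A v, ḃ = κ·G^T A D v for some κ ∈ ℂ, B = b b^T, Ḃ = ḃ b^T + b ḃ^T, R1 = A^H G* G^T A, R2 = A^H G* Rx* G^T A, and Rx ∈ ℂ^{M×M} Hermitian, the following identity holds: tr(Ḃ Rx Ḃ^H) = |κ|² · [ (v^H R2 v)·(v^H D R1 D v) + (v^H R1 v)·(v^H D R2 D v) + 2·Re{ (v^H D R2 v) · conj(v^H D R1 v) } ]. -/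
/-!
With `P = Gᵀ A`, `b = P v` and `c = P D v` we have `Ḃ = κ (c bᵀ + b cᵀ)`, and each of the four
terms of `tr(Ḃ Rx Ḃᴴ)` factors as a product of two sesquilinear forms in `b` and `c`. Since `D`
is real diagonal and `Rx* = Rxᵀ` for Hermitian `Rx`, the quadratic forms of `R1` and `R2` are
exactly these forms, and the two cross terms are complex conjugates of each other.
-/

open Matrix
open scoped ComplexOrder

namespace Matrix

variable {m n R : Type*} [Fintype m] [Fintype n]

section Semiring

variable [Semiring R] [StarRing R]

theorem star_dotProduct_conjTranspose_mul_mulVec (P Q : Matrix m n R) (v w : n → R) :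
    star v ⬝ᵥ (Pᴴ * Q) *ᵥ w = star (P *ᵥ v) ⬝ᵥ Q *ᵥ w := by
  rw [← mulVec_mulVec, dotProduct_mulVec, star_mulVec]

end Semiring

variable [CommSemiring R] [StarRing R]

theorem IsHermitian.star_star_dotProduct_mulVec {S : Matrix n n R} (hS : S.IsHermitian)
    (x y : n → R) : star (star x ⬝ᵥ S *ᵥ y) = star y ⬝ᵥ S *ᵥ x := by
  rw [star_dotProduct, star_star, star_mulVec, hS.eq, ← dotProduct_mulVec]

theorem trace_vecMulVec_mul_mul_conjTranspose_vecMulVec_s9 (x y z w : m → R) (S : Matrix m m R) :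
    trace (vecMulVec x y * S * (vecMulVec z w)ᴴ) = (star w ⬝ᵥ Sᵀ *ᵥ y) * (star z ⬝ᵥ x) := by
  rw [conjTranspose_vecMulVec, vecMulVec_mul, vecMulVec_mul_vecMulVec, vecMulVec_smul,
    trace_smul, trace_vecMulVec, smul_eq_mul, mulVec_transpose, dotProduct_comm (star w),
    dotProduct_comm (star z)]

theorem trace_vecMulVec_add_mul_mul_conjTranspose (x y : m → R) (S : Matrix m m R) :
    trace ((vecMulVec x y + vecMulVec y x) * S * (vecMulVec x y + vecMulVec y x)ᴴ) =
      (star y ⬝ᵥ Sᵀ *ᵥ y) * (star x ⬝ᵥ x) + (star x ⬝ᵥ Sᵀ *ᵥ x) * (star y ⬝ᵥ y) +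
        ((star x ⬝ᵥ Sᵀ *ᵥ y) * (star y ⬝ᵥ x) + (star y ⬝ᵥ Sᵀ *ᵥ x) * (star x ⬝ᵥ y)) := by
  simp only [conjTranspose_add, Matrix.add_mul, Matrix.mul_add, trace_add,
    trace_vecMulVec_mul_mul_conjTranspose_vecMulVec_s9]
  ring

end Matrix

theorem Complex.mul_conj_add_conj_mul (x y : ℂ) :
    x * (starRingEnd ℂ) y + (starRingEnd ℂ) x * y = ((2 * (x * (starRingEnd ℂ) y).re : ℝ) : ℂ) := by
  rw [← Complex.add_conj, map_mul, Complex.conj_conj, mul_comm ((starRingEnd ℂ) x)]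

theorem trace_Bdot_Rx_BdotH_identity_general {N M : ℕ}
    (v : Fin N → ℂ) (G : Matrix (Fin N) (Fin M) ℂ) (κ : ℂ)
    (Rx : Matrix (Fin M) (Fin M) ℂ) (hRxH : Rx.IsHermitian)
    (A D : Matrix (Fin N) (Fin N) ℂ)
    (hD : D = Matrix.diagonal (fun n : Fin N => ((n : ℕ) : ℂ)))
    (b bdot : Fin M → ℂ)
    (hb : b = (Gᵀ * A).mulVec v)
    (hbdot : bdot = κ • (Gᵀ * A * D).mulVec v)
    (Bdot : Matrix (Fin M) (Fin M) ℂ)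
    (hBdot : Bdot = Matrix.vecMulVec bdot b + Matrix.vecMulVec b bdot)
    (R1 R2 : Matrix (Fin N) (Fin N) ℂ)
    (hR1 : R1 = Aᴴ * G.map (starRingEnd ℂ) * Gᵀ * A)
    (hR2 : R2 = Aᴴ * G.map (starRingEnd ℂ) * Rx.map (starRingEnd ℂ) * Gᵀ * A) :
    Matrix.trace (Bdot * Rx * Bdotᴴ)
      = ((‖κ‖ ^ 2 : ℝ) : ℂ) *
          ((star v ⬝ᵥ R2.mulVec v) * (star v ⬝ᵥ (D * R1 * D).mulVec v)
           + (star v ⬝ᵥ R1.mulVec v) * (star v ⬝ᵥ (D * R2 * D).mulVec v)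
           + ((2 * ((star v ⬝ᵥ (D * R2).mulVec v) *
                (starRingEnd ℂ) (star v ⬝ᵥ (D * R1).mulVec v)).re : ℝ) : ℂ)) := by
  have hRxT : Rx.map (starRingEnd ℂ) = Rxᵀ := by
    nth_rewrite 2 [← hRxH.eq]
    rfl
  set P := Gᵀ * A
  have hPD : (P * D)ᴴ = D * Pᴴ := by
    rw [conjTranspose_mul, hD, diagonal_conjTranspose]
    congr 2
    funext n
    simp
  replace hR1 : R1 = Pᴴ * P := by
    rw [hR1, conjTranspose_mul, transpose_conjTranspose]
    simp only [Matrix.mul_assoc]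
    rfl
  replace hR2 : R2 = Pᴴ * (Rxᵀ * P) := by
    rw [hR2, hRxT, conjTranspose_mul, transpose_conjTranspose]
    simp only [Matrix.mul_assoc]
    rfl
  have hDR1 : D * R1 = (P * D)ᴴ * P := by rw [hR1, hPD, Matrix.mul_assoc]
  have hDR2 : D * R2 = (P * D)ᴴ * (Rxᵀ * P) := by rw [hR2, hPD, Matrix.mul_assoc]
  have hDR1D : D * R1 * D = (P * D)ᴴ * (P * D) := by rw [hDR1, Matrix.mul_assoc]
  have hDR2D : D * R2 * D = (P * D)ᴴ * (Rxᵀ * (P * D)) := by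
    rw [hDR2, Matrix.mul_assoc, Matrix.mul_assoc Rxᵀ]
  rw [hBdot, hbdot, hb, trace_vecMulVec_add_mul_mul_conjTranspose, hDR1D, hDR2D, hDR1, hDR2,
    hR1, hR2]
  simp only [star_dotProduct_conjTranspose_mul_mulVec]
  simp only [← mulVec_mulVec, mulVec_smul, star_smul, smul_dotProduct, dotProduct_smul, smul_eq_mul]
  set b := P *ᵥ v
  set c := P *ᵥ D *ᵥ v
  rw [← hRxH.transpose.star_star_dotProduct_mulVec c b, star_dotProduct b c,
    ← Complex.mul_conj_add_conj_mul, Complex.sq_norm, ← Complex.mul_conj]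
  simp only [Complex.star_def]
  ring

/-- With `b = Gᵀ A v`, `ḃ = κ·Gᵀ A D v`, `B = b bᵀ`, `Ḃ = ḃ bᵀ + b ḃᵀ`,
`R1 = Aᴴ G* Gᵀ A`, `R2 = Aᴴ G* Rx* Gᵀ A`, and `Rx` Hermitian:
`tr(Ḃ Rx Ḃᴴ) = |κ|²·[(vᴴ R2 v)(vᴴ D R1 D v) + (vᴴ R1 v)(vᴴ D R2 D v)
+ 2 Re{(vᴴ D R2 v)·conj(vᴴ D R1 v)}]`. -/
theorem trace_Bdot_Rx_BdotH_identity {N M : ℕ}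
    (a v : Fin N → ℂ) (G : Matrix (Fin N) (Fin M) ℂ) (κ : ℂ)
    (Rx : Matrix (Fin M) (Fin M) ℂ) (hRxH : Rx.IsHermitian) (hRx : Rx.PosSemidef)
    (A D : Matrix (Fin N) (Fin N) ℂ)
    (hA : A = Matrix.diagonal a)
    (hD : D = Matrix.diagonal (fun n : Fin N => ((n : ℕ) : ℂ)))
    (b bdot : Fin M → ℂ)
    (hb : b = (Gᵀ * A).mulVec v)
    (hbdot : bdot = κ • (Gᵀ * A * D).mulVec v)
    (B Bdot : Matrix (Fin M) (Fin M) ℂ)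
    (hB : B = Matrix.vecMulVec b b)
    (hBdot : Bdot = Matrix.vecMulVec bdot b + Matrix.vecMulVec b bdot)
    (R1 R2 : Matrix (Fin N) (Fin N) ℂ)
    (hR1 : R1 = Aᴴ * G.map (starRingEnd ℂ) * Gᵀ * A)
    (hR2 : R2 = Aᴴ * G.map (starRingEnd ℂ) * Rx.map (starRingEnd ℂ) * Gᵀ * A) :
    Matrix.trace (Bdot * Rx * Bdotᴴ)
      = ((‖κ‖ ^ 2 : ℝ) : ℂ) *
          ((star v ⬝ᵥ R2.mulVec v) * (star v ⬝ᵥ (D * R1 * D).mulVec v)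
           + (star v ⬝ᵥ R1.mulVec v) * (star v ⬝ᵥ (D * R2 * D).mulVec v)
           + ((2 * ((star v ⬝ᵥ (D * R2).mulVec v) *
                (starRingEnd ℂ) (star v ⬝ᵥ (D * R1).mulVec v)).re : ℝ) : ℂ)) :=
  trace_Bdot_Rx_BdotH_identity_general v G κ Rx hRxH A D hD b bdot hb hbdot Bdot hBdot R1 R2 hR1 hR2
end
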